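/- Let (T, d) be a compact real tree coded by a continuous function g (T = T_g), and let a ∈ T with smallest preimage s(a) and largest preimage t(a) under p_g. Then the subtree of descendants T(a) = { b ∈ T : a ≺ b } equals p_g([s(a), t(a)]). -/

import Mathlib

/-!
For `u, v ∈ [0, σ]`, `d(0, v) = d(0, u) + d(u, v)` says exactly that `g ≥ g u` between `u` and
`v`, and `d(u, r) = 0` says in addition that `g r = g u`. Hence the closed set `{g ≥ g u}` contains
every point of the class of `u` together with the segment joining it to `u`, so it contains all
of `[s(a), t(a)]`; a point equivalent to some `r` there therefore descends from `u`.
Conversely, if `g ≥ g u` between `u` and `v`, the first return of `g` to the level `g u` after `v`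
and its last visit before `v` (both exist because `g 0 = g σ = 0`) lie in the class of `u`, so
`v ∈ [s(a), t(a)]`.
-/

open Set OrderDual

section LinearOrder

variable {α δ : Type*} [ConditionallyCompleteLinearOrder α] [TopologicalSpace α] [OrderTopology α]
  [LinearOrder δ] [TopologicalSpace δ] [OrderClosedTopology δ]

theorem Icc_csInf_csSup_subset_of_forall_uIcc_subset {S C : Set α} {u : α} (hC : IsClosed C)
    (hu : u ∈ S) (hS₀ : BddBelow S) (hS₁ : BddAbove S) (hSC : ∀ a ∈ S, uIcc u a ⊆ C) :
    Icc (sInf S) (sSup S) ⊆ C := by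
  have hclosure : closure S ⊆ C := hC.closure_subset_iff.2 fun a ha => hSC a ha right_mem_uIcc
  rintro x ⟨hsx, hxt⟩
  rcases hsx.eq_or_lt with rfl | hsx
  · exact hclosure (csInf_mem_closure ⟨u, hu⟩ hS₀)
  rcases hxt.eq_or_lt with rfl | hxt
  · exact hclosure (csSup_mem_closure ⟨u, hu⟩ hS₁)
  rcases le_total x u with hxu | hux
  · obtain ⟨a, ha, hax⟩ := exists_lt_of_csInf_lt ⟨u, hu⟩ hsx
    exact hSC a ha (mem_uIcc.2 (Or.inr ⟨hax.le, hxu⟩))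
  · obtain ⟨a, ha, hxa⟩ := exists_lt_of_lt_csSup ⟨u, hu⟩ hxt
    exact hSC a ha (mem_uIcc.2 (Or.inl ⟨hux, hxa.le⟩))

variable [DenselyOrdered α] {f : α → δ} {a b : α} {c : δ}

theorem exists_eq_and_forall_le_of_le_of_ge (hab : a ≤ b) (hf : ContinuousOn f (Icc a b))
    (ha : c ≤ f a) (hb : f b ≤ c) :
    ∃ w ∈ Icc a b, f w = c ∧ ∀ x ∈ Icc a w, c ≤ f x := by
  set T := Icc a b ∩ f ⁻¹' {c}
  have hT : IsClosed T := hf.preimage_isClosed_of_isClosed isClosed_Icc isClosed_singleton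
  obtain ⟨w₀, hw₀, hfw₀⟩ := intermediate_value_Icc' hab hf ⟨hb, ha⟩
  have hw : sInf T ∈ T := hT.csInf_mem ⟨w₀, hw₀, hfw₀⟩ ⟨a, fun x hx => hx.1.1⟩
  refine ⟨sInf T, hw.1, hw.2, fun x hx => le_of_not_gt fun hfx => ?_⟩
  have hxb : x ≤ b := hx.2.trans hw.1.2
  obtain ⟨y, hy, hfy⟩ := intermediate_value_Icc' hx.1 (hf.mono (Icc_subset_Icc_right hxb))
    ⟨hfx.le, ha⟩
  have hwy : sInf T ≤ y := csInf_le ⟨a, fun x hx => hx.1.1⟩ ⟨⟨hy.1, hy.2.trans hxb⟩, hfy⟩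
  have hyx : y = x := le_antisymm hy.2 (hx.2.trans hwy)
  exact hfx.ne (hyx ▸ hfy)

theorem exists_eq_and_forall_le_of_ge_of_le (hab : a ≤ b) (hf : ContinuousOn f (Icc a b))
    (ha : f a ≤ c) (hb : c ≤ f b) :
    ∃ w ∈ Icc a b, f w = c ∧ ∀ x ∈ Icc w b, c ≤ f x := by
  have hf' : ContinuousOn (f ∘ ofDual) (Icc (toDual b) (toDual a)) := by
    rw [Icc_toDual]; exact hf
  obtain ⟨w, hw, hfw, hle⟩ := exists_eq_and_forall_le_of_le_of_ge
    (f := f ∘ ofDual) (toDual_le_toDual.2 hab) hf' hb ha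
  exact ⟨ofDual w, ⟨hw.2, hw.1⟩, hfw, fun x hx => hle (toDual x) ⟨hx.2, hx.1⟩⟩

end LinearOrder

/-- `minBetween g s t` and `treeDist g s t` are `m_g(s, t)` and `d_g(s, t)`, and
`treeClass g σ s` is `p_g⁻¹(p_g s)`. -/
noncomputable def minBetween (g : ℝ → ℝ) (s t : ℝ) : ℝ := sInf (g '' uIcc s t)

noncomputable def treeDist (g : ℝ → ℝ) (s t : ℝ) : ℝ := g s + g t - 2 * minBetween g s t

def treeClass (g : ℝ → ℝ) (σ s : ℝ) : Set ℝ := {r | r ∈ Icc 0 σ ∧ treeDist g s r = 0}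

section CodedTree

variable {g : ℝ → ℝ} {s t r c : ℝ}

theorem minBetween_le (hbdd : BddBelow (g '' uIcc s t)) {x : ℝ} (hx : x ∈ uIcc s t) :
    minBetween g s t ≤ g x :=
  csInf_le hbdd (mem_image_of_mem g hx)

theorem le_minBetween_iff (hbdd : BddBelow (g '' uIcc s t)) :
    c ≤ minBetween g s t ↔ ∀ x ∈ uIcc s t, c ≤ g x := by
  rw [minBetween, le_csInf_iff hbdd (nonempty_uIcc.image g), forall_mem_image]

theorem treeDist_self (s : ℝ) : treeDist g s s = 0 := by
  rw [treeDist, minBetween, uIcc_self, image_singleton, csInf_singleton]; ring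

theorem treeDist_eq_zero_iff (hbdd : BddBelow (g '' uIcc s t)) :
    treeDist g s t = 0 ↔ g t = g s ∧ ∀ x ∈ uIcc s t, g s ≤ g x := by
  have hs := minBetween_le hbdd left_mem_uIcc
  have ht := minBetween_le hbdd right_mem_uIcc
  rw [← le_minBetween_iff hbdd, treeDist]
  constructor
  · intro h; constructor <;> linarith
  · rintro ⟨h₁, h₂⟩; linarith

theorem bddBelow_treeClass (g : ℝ → ℝ) (σ s : ℝ) : BddBelow (treeClass g σ s) :=
  ⟨0, fun _ hr => hr.1.1⟩

theorem bddAbove_treeClass (g : ℝ → ℝ) (σ s : ℝ) : BddAbove (treeClass g σ s) :=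
  ⟨σ, fun _ hr => hr.1.2⟩

theorem self_mem_treeClass {σ : ℝ} (hs : s ∈ Icc 0 σ) : s ∈ treeClass g σ s :=
  ⟨hs, treeDist_self s⟩

variable {σ : ℝ} (hg₀ : ∀ x ∈ Icc 0 σ, 0 ≤ g x)
include hg₀

theorem bddBelow_image_uIcc (hs : s ∈ Icc 0 σ) (ht : t ∈ Icc 0 σ) : BddBelow (g '' uIcc s t) :=
  ⟨0, forall_mem_image.2 fun _ hx => hg₀ _ (uIcc_subset_Icc hs ht hx)⟩

theorem treeDist_zero_left (h0 : g 0 = 0) (ht : t ∈ Icc 0 σ) : treeDist g 0 t = g t := by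
  have h0σ : (0 : ℝ) ∈ Icc 0 σ := left_mem_Icc.2 (ht.1.trans ht.2)
  have hbdd := bddBelow_image_uIcc hg₀ h0σ ht
  have hle : minBetween g 0 t ≤ 0 := (minBetween_le hbdd left_mem_uIcc).trans_eq h0
  have hge : 0 ≤ minBetween g 0 t :=
    (le_minBetween_iff hbdd).2 fun x hx => hg₀ x (uIcc_subset_Icc h0σ ht hx)
  rw [treeDist, le_antisymm hle hge, h0]; ring

theorem treeDist_zero_eq_add_iff (h0 : g 0 = 0) (hs : s ∈ Icc 0 σ) (ht : t ∈ Icc 0 σ) :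
    treeDist g 0 t = treeDist g 0 s + treeDist g s t ↔ ∀ x ∈ uIcc s t, g s ≤ g x := by
  have hbdd := bddBelow_image_uIcc hg₀ hs ht
  have hle := minBetween_le hbdd left_mem_uIcc
  rw [treeDist_zero_left hg₀ h0 hs, treeDist_zero_left hg₀ h0 ht, ← le_minBetween_iff hbdd,
    treeDist]
  constructor <;> intro h <;> linarith

theorem exists_ge_treeDist_eq_zero (hg : ContinuousOn g (Icc 0 σ)) (hσ : g σ = 0)
    (hs : s ∈ Icc 0 σ) (ht : t ∈ Icc 0 σ) (hst : ∀ x ∈ uIcc s t, g s ≤ g x) :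
    ∃ w ∈ Icc 0 σ, t ≤ w ∧ treeDist g s w = 0 := by
  obtain ⟨w, hw, hgw, hle⟩ := exists_eq_and_forall_le_of_le_of_ge ht.2
    (hg.mono (Icc_subset_Icc_left ht.1)) (hst t right_mem_uIcc) (hσ.trans_le (hg₀ s hs))
  have hw' : w ∈ Icc 0 σ := ⟨ht.1.trans hw.1, hw.2⟩
  refine ⟨w, hw', hw.1, (treeDist_eq_zero_iff (bddBelow_image_uIcc hg₀ hs hw')).2 ⟨hgw, ?_⟩⟩
  intro x hx
  rcases uIcc_subset_uIcc_union_uIcc hx with hx | hx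
  · exact hst x hx
  · exact hle x (uIcc_of_le hw.1 ▸ hx)

theorem exists_le_treeDist_eq_zero (hg : ContinuousOn g (Icc 0 σ)) (h0 : g 0 = 0)
    (hs : s ∈ Icc 0 σ) (ht : t ∈ Icc 0 σ) (hst : ∀ x ∈ uIcc s t, g s ≤ g x) :
    ∃ w ∈ Icc 0 σ, w ≤ t ∧ treeDist g s w = 0 := by
  obtain ⟨w, hw, hgw, hle⟩ := exists_eq_and_forall_le_of_ge_of_le ht.1
    (hg.mono (Icc_subset_Icc_right ht.2)) (h0.trans_le (hg₀ s hs)) (hst t right_mem_uIcc)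
  have hw' : w ∈ Icc 0 σ := ⟨hw.1, hw.2.trans ht.2⟩
  refine ⟨w, hw', hw.2, (treeDist_eq_zero_iff (bddBelow_image_uIcc hg₀ hs hw')).2 ⟨hgw, ?_⟩⟩
  intro x hx
  rcases uIcc_subset_uIcc_union_uIcc hx with hx | hx
  · exact hst x hx
  · exact hle x (uIcc_of_ge hw.2 ▸ hx)

theorem mem_Icc_csInf_csSup_treeClass (hg : ContinuousOn g (Icc 0 σ)) (h0 : g 0 = 0)
    (hσ : g σ = 0) (hs : s ∈ Icc 0 σ) (ht : t ∈ Icc 0 σ) (hst : ∀ x ∈ uIcc s t, g s ≤ g x) :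
    t ∈ Icc (sInf (treeClass g σ s)) (sSup (treeClass g σ s)) := by
  obtain ⟨a, ha, hat, hsa⟩ := exists_le_treeDist_eq_zero hg₀ hg h0 hs ht hst
  obtain ⟨b, hb, htb, hsb⟩ := exists_ge_treeDist_eq_zero hg₀ hg hσ hs ht hst
  exact ⟨(csInf_le (bddBelow_treeClass g σ s) ⟨ha, hsa⟩).trans hat,
    htb.trans (le_csSup (bddAbove_treeClass g σ s) ⟨hb, hsb⟩)⟩

theorem Icc_csInf_csSup_treeClass_subset (hg : ContinuousOn g (Icc 0 σ)) (hs : s ∈ Icc 0 σ) :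
    Icc (sInf (treeClass g σ s)) (sSup (treeClass g σ s)) ⊆ Icc 0 σ ∩ g ⁻¹' Ici (g s) := by
  refine Icc_csInf_csSup_subset_of_forall_uIcc_subset
    (hg.preimage_isClosed_of_isClosed isClosed_Icc isClosed_Ici) (self_mem_treeClass hs)
    (bddBelow_treeClass g σ s) (bddAbove_treeClass g σ s) fun a ha x hx => ?_
  have hbdd := bddBelow_image_uIcc hg₀ hs ha.1
  exact ⟨uIcc_subset_Icc hs ha.1 hx, ((treeDist_eq_zero_iff hbdd).1 ha.2).2 x hx⟩

theorem forall_uIcc_le_of_treeDist_eq_zero (hg : ContinuousOn g (Icc 0 σ)) (hs : s ∈ Icc 0 σ)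
    (ht : t ∈ Icc 0 σ) (hr : r ∈ Icc (sInf (treeClass g σ s)) (sSup (treeClass g σ s)))
    (htr : treeDist g t r = 0) : ∀ x ∈ uIcc s t, g s ≤ g x := by
  have hsub := Icc_csInf_csSup_treeClass_subset hg₀ hg hs
  have hs' : s ∈ Icc (sInf (treeClass g σ s)) (sSup (treeClass g σ s)) :=
    ⟨csInf_le (bddBelow_treeClass g σ s) (self_mem_treeClass hs),
      le_csSup (bddAbove_treeClass g σ s) (self_mem_treeClass hs)⟩
  obtain ⟨hrt, htx⟩ := (treeDist_eq_zero_iff (bddBelow_image_uIcc hg₀ ht (hsub hr).1)).1 htr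
  intro x hx
  rcases uIcc_subset_uIcc_union_uIcc hx with hx | hx
  · exact (hsub (uIcc_subset_Icc hs' hr hx)).2
  · exact (hsub hr).2.trans (hrt.trans_le (htx x (uIcc_comm r t ▸ hx)))

end CodedTree

theorem stmt13_general (σ : ℝ) (g : ℝ → ℝ)
    (hg : ContinuousOn g (Set.Icc 0 σ))
    (hnonneg : ∀ x ∈ Set.Icc (0:ℝ) σ, 0 ≤ g x)
    (h0 : g 0 = 0) (h1 : g σ = 0)
    (m : ℝ → ℝ → ℝ)
    (hm : ∀ s t : ℝ, m s t = sInf (g '' Set.Icc (min s t) (max s t)))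
    (d : ℝ → ℝ → ℝ)
    (hd : ∀ s t : ℝ, d s t = g s + g t - 2 * m s t)
    (u : ℝ) (hu : u ∈ Set.Icc (0:ℝ) σ) :
    ∀ v ∈ Set.Icc (0:ℝ) σ,
      (d 0 v = d 0 u + d u v ↔
        ∃ r ∈ Set.Icc (sInf {r : ℝ | r ∈ Set.Icc (0:ℝ) σ ∧ d u r = 0})
            (sSup {r : ℝ | r ∈ Set.Icc (0:ℝ) σ ∧ d u r = 0}),
          d v r = 0) := by
  obtain rfl : m = minBetween g := funext₂ hm
  obtain rfl : d = treeDist g := funext₂ hd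
  intro v hv
  rw [treeDist_zero_eq_add_iff hnonneg h0 hu hv]
  refine ⟨fun huv => ⟨v, ?_, treeDist_self v⟩, fun ⟨r, hr, hvr⟩ => ?_⟩
  · exact mem_Icc_csInf_csSup_treeClass hnonneg hg h0 h1 hu hv huv
  · exact forall_uIcc_le_of_treeDist_eq_zero hnonneg hg hu hv hr hvr

/-- in the tree coded by `g`, the subtree of descendants of the class of
`u` equals the image of `[s(a), t(a)]` where `s(a)`, `t(a)` are the smallest and
largest representatives of the class of `u`. Expressed through the pseudo-metric `d`:
the class of `v` is a descendant of the class of `u` (i.e.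
`d(0,v) = d(0,u) + d(u,v)`) iff `v` is equivalent to some `r ∈ [s(a), t(a)]`. -/
theorem stmt13 (σ : ℝ) (hσ : 0 < σ) (g : ℝ → ℝ)
    (hg : ContinuousOn g (Set.Icc 0 σ))
    (hnonneg : ∀ x ∈ Set.Icc (0:ℝ) σ, 0 ≤ g x)
    (h0 : g 0 = 0) (h1 : g σ = 0)
    (m : ℝ → ℝ → ℝ)
    (hm : ∀ s t : ℝ, m s t = sInf (g '' Set.Icc (min s t) (max s t)))
    (d : ℝ → ℝ → ℝ)
    (hd : ∀ s t : ℝ, d s t = g s + g t - 2 * m s t)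
    (u : ℝ) (hu : u ∈ Set.Icc (0:ℝ) σ) :
    ∀ v ∈ Set.Icc (0:ℝ) σ,
      (d 0 v = d 0 u + d u v ↔
        ∃ r ∈ Set.Icc (sInf {r : ℝ | r ∈ Set.Icc (0:ℝ) σ ∧ d u r = 0})
            (sSup {r : ℝ | r ∈ Set.Icc (0:ℝ) σ ∧ d u r = 0}),
          d v r = 0) :=
  stmt13_general σ g hg hnonneg h0 h1 m hm d hd u hu
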